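/- With A_n^r and δ as above, define D: A_n^r → A_{n-1}^{r-1} by D[n_1,...,n_s] = Σ_{i=1}^{s} Q(n_i)(-1)^{n_1+...+n_{i-1}} [n_1,...,n_i - 1,...,n_s], where Q(m) = 0 if m is odd and Q(m) = 2 if m is even (terms with n_i - 1 = 0 are omitted). Then D ∘ δ = δ ∘ D. -/

import Mathlib

open Finsupp

noncomputable section

/-- `P x y`, as an integer. -/
def Pz (x y : ℕ) : ℤ :=
  if Odd x ∧ Odd y then 0 else (Nat.choose (x / 2 + y / 2) (x / 2) : ℤ)

/-- `Q m`: `2` for even `m`, `0` for odd `m`. -/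
def Qz (m : ℕ) : ℤ := if Even m then 2 else 0

/-- Merge the parts at positions `l` and `l+1` of a composition. -/
def mergeAt (L : List ℕ) (l : ℕ) : List ℕ :=
  L.take l ++ (L.getD l 0 + L.getD (l + 1) 0) :: L.drop (l + 2)

/-- Extend a map on basis elements to an additive map on the free abelian
group on compositions. -/
def liftOp (f : List ℕ → (List ℕ →₀ ℤ)) : (List ℕ →₀ ℤ) →+ (List ℕ →₀ ℤ) :=
  Finsupp.liftAddHom fun L => zmultiplesHom _ (f L)

/-- Value of the Fuks–Vainshtein differential `δ` on a composition. -/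
def dB (L : List ℕ) : List ℕ →₀ ℤ :=
  ∑ l ∈ Finset.range (L.length - 1),
    ((-1 : ℤ) ^ l * Pz (L.getD l 0) (L.getD (l + 1) 0)) • Finsupp.single (mergeAt L l) 1

/-- The differential `δ`. -/
def deltaOp : (List ℕ →₀ ℤ) →+ (List ℕ →₀ ℤ) := liftOp dB

/-- Value of Napolitano's operator `D` on a composition: decrease an even part
by one, with coefficient `2 · (-1)^(sum of preceding parts)`. -/
def DB (L : List ℕ) : List ℕ →₀ ℤ :=
  ∑ i ∈ Finset.range L.length,
    (Qz (L.getD i 0) * (-1 : ℤ) ^ ((L.take i).sum)) •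
      Finsupp.single (L.set i (L.getD i 0 - 1)) 1

/-- The operator `D`. -/
def DOp : (List ℕ →₀ ℤ) →+ (List ℕ →₀ ℤ) := liftOp DB

/-- Value of the operator `S` on a composition: insert a `1` at position `k`
and subtract `2` from a later part `i ≥ k`, with sign
`(-1)^(k + sum of the first k parts)` (1-indexed: `(-1)^{k+1+n_1+⋯+n_{k-1}}`);
terms where the decreased part would become `≤ 0` are omitted. -/
def SB (L : List ℕ) : List ℕ →₀ ℤ :=
  ∑ i ∈ Finset.range L.length, ∑ k ∈ Finset.range (i + 1),
    if 3 ≤ L.getD i 0 then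
      ((-1 : ℤ) ^ (k + (L.take k).sum)) •
        Finsupp.single (List.insertIdx (L.set i (L.getD i 0 - 2)) k 1) (1 : ℤ)
    else 0

/-- The operator `S`. -/
def SOp : (List ℕ →₀ ℤ) →+ (List ℕ →₀ ℤ) := liftOp SB

end


noncomputable section Aux

theorem liftOp_single (f : List ℕ → (List ℕ →₀ ℤ)) (a : List ℕ) (b : ℤ) :
    liftOp f (Finsupp.single a b) = b • f a := by
  simp [liftOp]

/-- The additive map sending `[n₁,…]` to `[x,n₁,…]`. -/
def consOp (x : ℕ) : (List ℕ →₀ ℤ) →+ (List ℕ →₀ ℤ) :=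
  liftOp (fun M => Finsupp.single (x :: M) 1)

/-- The additive map merging a new head `x` into the first part. -/
def mergeHead (x : ℕ) : (List ℕ →₀ ℤ) →+ (List ℕ →₀ ℤ) :=
  liftOp (fun M => match M with
    | [] => 0
    | b :: T => Pz x b • Finsupp.single ((x + b) :: T) (1 : ℤ))

theorem consOp_single (x : ℕ) (a : List ℕ) (b : ℤ) :
    consOp x (Finsupp.single a b) = Finsupp.single (x :: a) b := by
  simp [consOp, liftOp_single, Finsupp.smul_single]

theorem mergeHead_single_cons (x y : ℕ) (T : List ℕ) (b : ℤ) :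
    mergeHead x (Finsupp.single (y :: T) b)
      = b • (Pz x y • Finsupp.single ((x + y) :: T) (1:ℤ)) := by
  simp [mergeHead, liftOp_single]

theorem deltaOp_single (a : List ℕ) (b : ℤ) :
    deltaOp (Finsupp.single a b) = b • dB a := liftOp_single _ a b

theorem DOp_single (a : List ℕ) (b : ℤ) :
    DOp (Finsupp.single a b) = b • DB a := liftOp_single _ a b

theorem mergeAt_cons (a : ℕ) (M : List ℕ) (l : ℕ) :
    mergeAt (a :: M) (l + 1) = a :: mergeAt M l := by
  simp [mergeAt]

theorem dB_nil : dB [] = 0 := by simp [dB]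

theorem dB_singleton (x : ℕ) : dB [x] = 0 := by simp [dB]

theorem DB_nil : DB [] = 0 := by simp [DB]

theorem dB_cons_cons (x y : ℕ) (T : List ℕ) :
    dB (x :: y :: T) =
      Pz x y • Finsupp.single ((x + y) :: T) (1:ℤ) - consOp x (dB (y :: T)) := by
  rw [dB, dB, show (x :: y :: T).length - 1 = T.length + 1 by simp,
    show (y :: T).length - 1 = T.length by simp, Finset.sum_range_succ', map_sum]
  have h : ∀ l ∈ Finset.range T.length,
      ((-1:ℤ) ^ (l+1) * Pz ((x :: y :: T).getD (l+1) 0) ((x :: y :: T).getD (l+1+1) 0)) •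
        Finsupp.single (mergeAt (x :: y :: T) (l+1)) (1:ℤ)
      = - consOp x (((-1:ℤ) ^ l * Pz ((y :: T).getD l 0) ((y :: T).getD (l+1) 0)) •
        Finsupp.single (mergeAt (y :: T) l) (1:ℤ)) := by
    intro l _
    rw [map_zsmul, consOp_single, mergeAt_cons, ← neg_smul]
    congr 1
    simp only [List.getD_cons_succ]
    ring
  rw [Finset.sum_congr rfl h, Finset.sum_neg_distrib]
  have h0 : mergeAt (x :: y :: T) 0 = (x + y) :: T := by simp [mergeAt]
  simp only [h0, pow_zero, one_mul, List.getD_cons_zero, List.getD_cons_succ,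
    zero_add]
  abel

theorem DB_cons (x : ℕ) (T : List ℕ) :
    DB (x :: T) =
      Qz x • Finsupp.single ((x - 1) :: T) (1:ℤ) + ((-1:ℤ)^x) • consOp x (DB T) := by
  rw [DB, DB, show (x :: T).length = T.length + 1 by simp, Finset.sum_range_succ',
    map_sum, Finset.smul_sum]
  conv_lhs => rw [add_comm]
  congr 1
  · simp
  · refine Finset.sum_congr rfl fun i _ => ?_
    rw [map_zsmul, consOp_single]
    simp only [List.getD_cons_succ, List.set_cons_succ, List.take_succ_cons,
      List.sum_cons]
    rw [smul_smul]
    congr 1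
    rw [pow_add]
    ring

theorem DOp_consOp (x : ℕ) (v : List ℕ →₀ ℤ) :
    DOp (consOp x v) = Qz x • consOp (x - 1) v + ((-1:ℤ)^x) • consOp x (DOp v) := by
  induction v using Finsupp.induction_linear with
  | zero => simp
  | add f g hf hg => simp only [map_add, hf, hg, smul_add]; abel
  | single a b =>
    rw [consOp_single, DOp_single, DB_cons, consOp_single, DOp_single, map_zsmul,
      smul_add]
    congr 1
    · rw [smul_comm, Finsupp.smul_single, smul_eq_mul, mul_one]
    · rw [smul_comm]

theorem deltaOp_consOp (x : ℕ) (v : List ℕ →₀ ℤ) :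
    deltaOp (consOp x v) = mergeHead x v - consOp x (deltaOp v) := by
  induction v using Finsupp.induction_linear with
  | zero => simp
  | add f g hf hg => simp only [map_add, hf, hg]; abel
  | single a b =>
    cases a with
    | nil =>
      rw [consOp_single, deltaOp_single, dB_singleton, deltaOp_single, dB_nil]
      simp [mergeHead, liftOp_single]
    | cons y T =>
      rw [consOp_single, deltaOp_single, dB_cons_cons, deltaOp_single,
        mergeHead_single_cons, map_zsmul, smul_sub]

theorem mergeHead_consOp (x y : ℕ) (v : List ℕ →₀ ℤ) :
    mergeHead x (consOp y v) = Pz x y • consOp (x + y) v := by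
  induction v using Finsupp.induction_linear with
  | zero => simp
  | add f g hf hg => simp only [map_add, hf, hg, smul_add]
  | single a b =>
    rw [consOp_single, mergeHead_single_cons, consOp_single, smul_comm]
    congr 1
    rw [Finsupp.smul_single, smul_eq_mul, mul_one]

theorem key_scalar (x y : ℕ) (hx : 0 < x) (hy : 0 < y) :
    Pz x y * Qz (x + y) =
      Qz x * Pz (x - 1) y + (-1:ℤ)^x * (Qz y * Pz x (y - 1)) := by
  rcases Nat.even_or_odd x with hex | hox
  · have hx2 : x % 2 = 0 := Nat.even_iff.mp hex
    rcases Nat.even_or_odd y with hey | hoy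
    · -- both even
      have hy2 : y % 2 = 0 := Nat.even_iff.mp hey
      simp only [Pz, Qz]
      rw [if_neg (show ¬(Odd x ∧ Odd y) by simp only [Nat.odd_iff]; omega),
        if_neg (show ¬(Odd (x-1) ∧ Odd y) by simp only [Nat.odd_iff]; omega),
        if_neg (show ¬(Odd x ∧ Odd (y-1)) by simp only [Nat.odd_iff]; omega),
        if_pos (show Even (x+y) by simp only [Nat.even_iff]; omega),
        if_pos (show Even x by simp only [Nat.even_iff]; omega),
        if_pos (show Even y by simp only [Nat.even_iff]; omega),
        Even.neg_one_pow hex]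
      obtain ⟨a, ha⟩ : ∃ a, x = 2 * a + 2 := ⟨x / 2 - 1, by omega⟩
      obtain ⟨b, hb⟩ : ∃ b, y = 2 * b + 2 := ⟨y / 2 - 1, by omega⟩
      rw [show x / 2 = a + 1 by omega, show y / 2 = b + 1 by omega,
        show (x - 1) / 2 = a by omega, show (y - 1) / 2 = b by omega]
      rw [show (a + 1 + (b + 1)).choose (a + 1)
            = (a + (b + 1)).choose a + (a + 1 + b).choose (a + 1) by
          rw [show a + 1 + (b + 1) = (a + (b + 1)) + 1 by ring, Nat.choose_succ_succ,
            show a + (b + 1) = a + 1 + b by ring]]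
      push_cast
      ring
    · -- x even, y odd
      have hy2 : y % 2 = 1 := Nat.odd_iff.mp hoy
      simp only [Pz, Qz]
      rw [if_neg (show ¬ Even (x+y) by simp only [Nat.even_iff]; omega),
        if_neg (show ¬ Even y by simp only [Nat.even_iff]; omega),
        if_pos (show Odd (x-1) ∧ Odd y by simp only [Nat.odd_iff]; omega)]
      ring
  · have hx2 : x % 2 = 1 := Nat.odd_iff.mp hox
    rcases Nat.even_or_odd y with hey | hoy
    · -- x odd, y even
      have hy2 : y % 2 = 0 := Nat.even_iff.mp hey
      simp only [Pz, Qz]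
      rw [if_neg (show ¬ Even (x+y) by simp only [Nat.even_iff]; omega),
        if_neg (show ¬ Even x by simp only [Nat.even_iff]; omega),
        if_pos (show Odd x ∧ Odd (y-1) by simp only [Nat.odd_iff]; omega)]
      ring
    · -- both odd
      have hy2 : y % 2 = 1 := Nat.odd_iff.mp hoy
      simp only [Pz, Qz]
      rw [if_pos (show Odd x ∧ Odd y by simp only [Nat.odd_iff]; omega),
        if_neg (show ¬ Even x by simp only [Nat.even_iff]; omega),
        if_neg (show ¬ Even y by simp only [Nat.even_iff]; omega)]
      ring

theorem main_comm (L : List ℕ) (hL : ∀ m ∈ L, 0 < m) :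
    DOp (dB L) = deltaOp (DB L) := by
  induction L with
  | nil => simp [dB_nil, DB_nil]
  | cons x T ih =>
    cases T with
    | nil =>
      rw [dB_singleton, DB_cons, DB_nil, map_zero, map_add, map_zsmul, map_zsmul,
        deltaOp_single, dB_singleton]
      simp
    | cons y T' =>
      have hx : 0 < x := hL x (by simp)
      have hy : 0 < y := hL y (by simp)
      have ih' : DOp (dB (y :: T')) = deltaOp (DB (y :: T')) :=
        ih (fun m hm => hL m (List.mem_cons_of_mem _ hm))
      rw [dB_cons_cons, DB_cons x, map_sub, map_zsmul, DOp_single, smul_smul, mul_one,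
        DOp_consOp, ih', map_add, map_zsmul, map_zsmul, deltaOp_single, deltaOp_consOp]
      set u := deltaOp (DB (y :: T')) with hu
      rw [DB_cons (x + y), dB_cons_cons (x - 1), DB_cons y, map_add, map_zsmul,
        map_zsmul, mergeHead_single_cons, mergeHead_consOp]
      rw [show x - 1 + y = x + y - 1 by omega, show x + (y - 1) = x + y - 1 by omega]
      have hkey := key_scalar x y hx hy
      match_scalars
      · linear_combination hkey
      · ring
      · ring
      · ring

end Aux

theorem stmt7 (L : List ℕ) (hL : ∀ m ∈ L, 0 < m) :
    DOp (deltaOp (Finsupp.single L (1 : ℤ))) =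
      deltaOp (DOp (Finsupp.single L (1 : ℤ))) := by
  rw [deltaOp_single, DOp_single, one_smul, one_smul]
  exact main_comm L hL
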